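/- Let C be a nonempty subset of ℂ² ∖ {0} that is closed in the subspace topology of ℂ² ∖ {0}, invariant under scalar multiplication by ℂˣ, and invariant under the action of SL(2,ℝ). Then C contains the whole set {v ∈ ℂ² ∖ {0} : τ(v) = 0}. -/

import Mathlib

open Matrix

/-- `τ(v) = Im (v₀ * conj v₁)` for `v ∈ ℂ²`. -/
noncomputable def tau (v : Fin 2 → ℂ) : ℝ := (v 0 * (starRingEnd ℂ) (v 1)).im

/-- The action of a real `2×2` matrix on `ℂ²`: map the entries into `ℂ`
and take matrix–vector multiplication. -/
noncomputable def actR (g : Matrix (Fin 2) (Fin 2) ℝ) (v : Fin 2 → ℂ) : Fin 2 → ℂ :=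
  (g.map (Complex.ofReal ·)) *ᵥ v

lemma actR_apply (a b c d : ℝ) (v : Fin 2 → ℂ) :
    actR !![a, b; c, d] v = ![a * v 0 + b * v 1, c * v 0 + d * v 1] := by
  funext i
  fin_cases i <;>
    simp [actR, Matrix.mulVec, dotProduct, Fin.sum_univ_two, Matrix.map_apply]

open Filter in
lemma limit_mem (C : Set (Fin 2 → ℂ))
    (hC0 : C ⊆ {v : Fin 2 → ℂ | v ≠ 0})
    (hclosed : IsClosed ((Subtype.val ⁻¹' C) : Set {v : Fin 2 → ℂ // v ≠ 0}))
    {f : ℕ → Fin 2 → ℂ} (hf : ∀ n, f n ∈ C) {L : Fin 2 → ℂ} (hL : L ≠ 0)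
    (ht : Tendsto f atTop (nhds L)) : L ∈ C := by
  have hF : Tendsto (fun n => (⟨f n, hC0 (hf n)⟩ : {v : Fin 2 → ℂ // v ≠ 0}))
      atTop (nhds ⟨L, hL⟩) := tendsto_subtype_rng.2 ht
  have := hclosed.mem_of_tendsto hF (Filter.Eventually.of_forall fun n => hf n)
  exact this

/-- Every nonempty subset of `ℂ² ∖ {0}` that is closed in the subspace
topology, `ℂˣ`-stable and `SL(2,ℝ)`-stable contains the whole closed cone
`{τ = 0}` (the cone over the closed orbit `H₀ ≅ P¹(ℝ)`). -/
theorem closed_orbit_in_closed_invariant (C : Set (Fin 2 → ℂ))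
    (hne : C.Nonempty)
    (hC0 : C ⊆ {v : Fin 2 → ℂ | v ≠ 0})
    (hclosed : IsClosed ((Subtype.val ⁻¹' C) : Set {v : Fin 2 → ℂ // v ≠ 0}))
    (hscal : ∀ (l : ℂˣ), ∀ v ∈ C, (l : ℂ) • v ∈ C)
    (hsl : ∀ (g : Matrix.SpecialLinearGroup (Fin 2) ℝ), ∀ v ∈ C,
        actR (g : Matrix (Fin 2) (Fin 2) ℝ) v ∈ C) :
    {v : Fin 2 → ℂ | v ≠ 0 ∧ tau v = 0} ⊆ C := by
  classical
  -- Step 1: find u ∈ C with u 0 ≠ 0.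
  obtain ⟨v, hv⟩ := hne
  have hvne : v ≠ 0 := hC0 hv
  obtain ⟨u, hu, hu0⟩ : ∃ u ∈ C, u 0 ≠ 0 := by
    by_cases h : v 0 ≠ 0
    · exact ⟨v, hv, h⟩
    · push_neg at h
      have hv1 : v 1 ≠ 0 := by
        intro h1
        apply hvne
        funext i; fin_cases i <;> simpa [h, h1]
      refine ⟨actR !![(0:ℝ), -1; 1, 0] v,
        hsl ⟨!![(0:ℝ), -1; 1, 0], by simp [Matrix.det_fin_two_of]⟩ v hv, ?_⟩
      rw [actR_apply]
      simpa [h] using hv1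
  -- Step 2: show ![u 0, 0] ∈ C via a limit.
  have hseq : ∀ n : ℕ, (![u 0, ((((n:ℝ)+1:ℝ))⁻¹:ℂ)^2 * u 1] : Fin 2 → ℂ) ∈ C := by
    intro n
    have htne : ((n:ℝ) + 1) ≠ 0 := by positivity
    have htC : (((n:ℝ) + 1 : ℝ):ℂ) ≠ 0 := by exact_mod_cast htne
    have hg : (!![(n:ℝ)+1, 0; 0, ((n:ℝ)+1)⁻¹] : Matrix (Fin 2) (Fin 2) ℝ).det = 1 := by
      simp [Matrix.det_fin_two_of, mul_inv_cancel₀ htne]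
    have h1 := hsl ⟨_, hg⟩ u hu
    have h2 := hscal (Units.mk0 ((((n:ℝ)+1:ℝ):ℂ))⁻¹ (inv_ne_zero htC)) _ h1
    have heq : ((Units.mk0 ((((n:ℝ)+1:ℝ):ℂ))⁻¹ (inv_ne_zero htC) : ℂˣ) : ℂ) •
        actR !![(n:ℝ)+1, 0; 0, ((n:ℝ)+1)⁻¹] u
        = ![u 0, ((((n:ℝ)+1:ℝ))⁻¹:ℂ)^2 * u 1] := by
      rw [actR_apply]
      funext i
      fin_cases i
      · have htC2 : ((n:ℂ) + 1) ≠ 0 := by exact_mod_cast htne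
        simp only [Units.val_mk0, Pi.smul_apply, Matrix.cons_val_zero, smul_eq_mul]
        push_cast
        field_simp
        ring
      · simp only [Units.val_mk0, Pi.smul_apply, Matrix.cons_val_one,
          Matrix.head_cons, smul_eq_mul]
        push_cast
        ring
    rwa [heq] at h2
  have hLne : (![u 0, 0] : Fin 2 → ℂ) ≠ 0 := by
    intro h
    apply hu0
    have := congrFun h 0
    simpa using this
  have hLmem : (![u 0, 0] : Fin 2 → ℂ) ∈ C := by
    refine limit_mem C hC0 hclosed hseq hLne ?_
    rw [tendsto_pi_nhds]
    intro i
    fin_cases i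
    · simpa using tendsto_const_nhds
    · have h1 : Filter.Tendsto (fun n : ℕ => ((((n:ℝ)+1:ℝ))⁻¹:ℂ))
          Filter.atTop (nhds 0) := by
        have := tendsto_one_div_add_atTop_nhds_zero_nat (𝕜 := ℝ)
        have h2 := (Complex.continuous_ofReal.tendsto 0).comp this
        simpa [Function.comp_def, one_div] using h2
      have h2 := ((h1.pow 2).mul_const (u 1))
      simpa using h2
  -- Step 3: ![1, 0] ∈ C.
  have he : (![(1:ℂ), 0] : Fin 2 → ℂ) ∈ C := by
    have h := hscal (Units.mk0 (u 0)⁻¹ (inv_ne_zero hu0)) _ hLmem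
    have heq : ((Units.mk0 (u 0)⁻¹ (inv_ne_zero hu0) : ℂˣ) : ℂ) • (![u 0, 0] : Fin 2 → ℂ)
        = ![(1:ℂ), 0] := by
      funext i
      fin_cases i <;> simp [inv_mul_cancel₀ hu0]
    rwa [heq] at h
  -- Step 4: any w with τ(w) = 0 is in C.
  rintro w ⟨hwne, hwtau⟩
  by_cases hw1 : w 1 = 0
  · have hw0 : w 0 ≠ 0 := by
      intro h0
      apply hwne
      funext i; fin_cases i <;> simpa [hw1, h0]
    have h := hscal (Units.mk0 (w 0) hw0) _ he
    have heq : ((Units.mk0 (w 0) hw0 : ℂˣ) : ℂ) • (![(1:ℂ), 0] : Fin 2 → ℂ) = w := by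
      funext i; fin_cases i <;> simp [hw1]
    rwa [heq] at h
  · -- w 0 / w 1 is real
    set a : ℝ := (w 0 / w 1).re with ha
    have hreal : ((a : ℝ) : ℂ) = w 0 / w 1 := by
      have him : (w 0 / w 1).im = 0 := by
        have h := hwtau
        simp only [tau, Complex.mul_im, Complex.conj_re, Complex.conj_im] at h
        rw [Complex.div_im]
        rw [div_sub_div_same]
        apply div_eq_zero_iff.mpr
        left
        linarith
      exact (Complex.ext (by simp [ha]) (by simp [him])).symm
    have hg : (!![a, -1; 1, 0] : Matrix (Fin 2) (Fin 2) ℝ).det = 1 := by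
      simp [Matrix.det_fin_two_of]
    have h1 := hsl ⟨_, hg⟩ _ he
    have h2 := hscal (Units.mk0 (w 1) hw1) _ h1
    have heq : ((Units.mk0 (w 1) hw1 : ℂˣ) : ℂ) •
        actR !![a, -1; 1, 0] ![(1:ℂ), 0] = w := by
      rw [actR_apply]
      funext i
      fin_cases i
      · have hkey : w 1 * ((a:ℝ):ℂ) = w 0 := by
          rw [hreal, mul_comm, div_mul_cancel₀ _ hw1]
        simpa using hkey
      · simp
    rwa [heq] at h2
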